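/- Let y > 0 and τ = 1/2 + y·i. Then the absolutely convergent lattice sum Σ over odd m and all n ∈ ℤ of (−1)ⁿ·(m/2 + n)² / |mτ + n|⁶ equals 0. -/

import Mathlib

/-!
The substitution `n ↦ -n - m` is an involution of `ℤ × ℤ` fixing `m`. Since `Re τ = 1/2`, it sends
`mτ + n` to `-conj (mτ + n)`, so `|mτ + n|` is unchanged, as is `(m/2 + n)²`, while for odd `m` the
sign `(-1)ⁿ` flips. The summand is therefore odd under a bijection of the index set, and its sum
vanishes.
-/

open ComplexConjugate

theorem tsum_eq_zero_of_comp_eq_neg {α G : Type*} [AddCommGroup G] [TopologicalSpace G]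
    [IsTopologicalAddGroup G] [T2Space G] [IsAddTorsionFree G]
    (e : α ≃ α) {f : α → G} (hf : ∀ a, f (e a) = -f a) : ∑' a, f a = 0 := by
  refine self_eq_neg.mp ?_
  calc ∑' a, f a = ∑' a, f (e a) := (e.tsum_eq f).symm
    _ = -∑' a, f a := by simp_rw [hf]; exact tsum_neg

theorem neg_one_zpow_neg_sub_of_odd {R : Type*} [DivisionRing R] {m : ℤ} (hm : Odd m) (n : ℤ) :
    (-1 : R) ^ (-n - m) = -(-1 : R) ^ n := by
  have hodd : Odd (-(2 * n) - m) := (even_two_mul n).neg.sub_odd hm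
  rw [show -n - m = n + (-(2 * n) - m) by ring, zpow_add₀ (by norm_num), hodd.neg_one_zpow,
    mul_neg_one]

theorem intCast_mul_add_neg_sub_eq_neg_conj {τ : ℂ} (hτ : τ.re = 1 / 2) (m n : ℤ) :
    (m : ℂ) * τ + ((-n - m : ℤ) : ℂ) = -conj ((m : ℂ) * τ + n) := by
  refine Complex.ext ?_ (by simp)
  simp [hτ]
  ring

theorem norm_intCast_mul_add_neg_sub {τ : ℂ} (hτ : τ.re = 1 / 2) (m n : ℤ) :
    ‖(m : ℂ) * τ + ((-n - m : ℤ) : ℂ)‖ = ‖(m : ℂ) * τ + n‖ := by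
  rw [intCast_mul_add_neg_sub_eq_neg_conj hτ, norm_neg, Complex.norm_conj]

def halfShiftReflection : Equiv.Perm (ℤ × ℤ) :=
  Function.Involutive.toPerm (fun p => (p.1, -p.2 - p.1)) fun p => by simp

@[simp]
theorem halfShiftReflection_apply (m n : ℤ) : halfShiftReflection (m, n) = (m, -n - m) := rfl

theorem lattice_sum_odd_halfshift_sq_general (y : ℝ) :
    (∑' p : ℤ × ℤ,
      if Odd p.1 then
        ((-1 : ℝ) ^ p.2 * ((p.1 : ℝ) / 2 + (p.2 : ℝ)) ^ 2)
          / ‖(p.1 : ℂ) * ((1 / 2 : ℂ) + (y : ℂ) * Complex.I) + (p.2 : ℂ)‖ ^ 6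
      else 0) = 0 := by
  refine tsum_eq_zero_of_comp_eq_neg halfShiftReflection ?_
  rintro ⟨m, n⟩
  by_cases hm : Odd m
  · have hre : ((1 / 2 : ℂ) + (y : ℂ) * Complex.I).re = 1 / 2 := by simp
    simp only [halfShiftReflection_apply, hm, if_true]
    rw [norm_intCast_mul_add_neg_sub hre, neg_one_zpow_neg_sub_of_odd hm]
    push_cast
    ring
  · simp [hm]

/-- For `τ = 1/2 + y·i` with `y > 0`, the lattice sum
`Σ_{m odd, n ∈ ℤ} (−1)ⁿ·(m/2+n)²/|mτ+n|⁶` vanishes. -/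
theorem lattice_sum_odd_halfshift_sq (y : ℝ) (hy : 0 < y) :
    (∑' p : ℤ × ℤ,
      if Odd p.1 then
        ((-1 : ℝ) ^ p.2 * ((p.1 : ℝ) / 2 + (p.2 : ℝ)) ^ 2)
          / ‖(p.1 : ℂ) * ((1 / 2 : ℂ) + (y : ℂ) * Complex.I) + (p.2 : ℂ)‖ ^ 6
      else 0) = 0 :=
  lattice_sum_odd_halfshift_sq_general y
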